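/- arXiv:math/0611039 — 6 statements merged into one kernel-verified Lean document; each statement's English description precedes it below -/
import Mathlib

section
/- Let n ≥ 2 and m ≥ 1. A finite set S is a facet of the explicit stacked sphere Δ_m if and only if: |S| = n, S ⊆ {i, i+1, …, i+n} for some 1 ≤ i ≤ m, and S ≠ {j, j+1, …, j+n-1} for every 2 ≤ j ≤ m. -/
/-- The facets of the explicit stacked sphere `Δ_m` on vertex set `{1, …, n+m}`:
`Δ_1` consists of all `n`-element subsets of `{1, …, n+1}`, and `Δ_{i+1}` is
obtained from `Δ_i` by subdividing the facet `{i+1, …, n+i}` at the new vertex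
`n+i+1`. -/
def Delta (n : ℕ) : ℕ → Finset (Finset ℕ)
  | 0 => ∅
  | 1 => (Finset.Icc 1 (n + 1)).powersetCard n
  | (m + 2) =>
      ((Delta n (m + 1)).erase (Finset.Icc (m + 2) (n + m + 1))) ∪
        (Finset.Icc (m + 2) (n + m + 1)).image
          (fun t => insert (n + m + 2) ((Finset.Icc (m + 2) (n + m + 1)).erase t))

/-- a finite set `S` is a facet of `Δ_m` iff `S` has `n` elements,
`S ⊆ {i, …, i+n}` for some `1 ≤ i ≤ m`, and `S ≠ {j, …, j+n-1}` for every
`2 ≤ j ≤ m`. -/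
theorem delta_facet_characterization (n m : ℕ) (hn : 2 ≤ n) (hm : 1 ≤ m) (S : Finset ℕ) :
    S ∈ Delta n m ↔
      S.card = n ∧
      (∃ i, 1 ≤ i ∧ i ≤ m ∧ S ⊆ Finset.Icc i (i + n)) ∧
      (∀ j, 2 ≤ j → j ≤ m → S ≠ Finset.Icc j (j + n - 1)) := by
  induction m, hm using Nat.le_induction with
  | base =>
    simp only [Delta, Finset.mem_powersetCard]
    constructor
    · rintro ⟨hsub, hcard⟩
      refine ⟨hcard, ⟨1, le_refl 1, le_refl 1, by simpa [Nat.add_comm] using hsub⟩, ?_⟩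
      intro j hj hj'; omega
    · rintro ⟨hcard, ⟨i, hi1, hi2, hsub⟩, -⟩
      interval_cases i
      exact ⟨by simpa [Nat.add_comm] using hsub, hcard⟩
  | succ m hm IH =>
    obtain ⟨k, rfl⟩ : ∃ k, m = k + 1 := ⟨m - 1, by omega⟩
    rw [Delta]
    set F := Finset.Icc (k + 2) (n + k + 1) with hF
    have hFcard : F.card = n := by rw [hF, Nat.card_Icc]; omega
    have hnew : n + k + 2 ∉ F := by simp [hF, Finset.mem_Icc]
    simp only [Finset.mem_union, Finset.mem_erase, Finset.mem_image]
    constructor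
    · rintro (⟨hne, hS⟩ | ⟨t, ht, rfl⟩)
      · obtain ⟨hcard, ⟨i, hi1, hi2, hsub⟩, hj⟩ := IH.mp hS
        refine ⟨hcard, ⟨i, hi1, by omega, hsub⟩, ?_⟩
        intro j hj2 hjm
        rcases Nat.lt_or_ge j (k + 2) with h | h
        · exact hj j hj2 (by omega)
        · have : j = k + 2 := by omega
          subst this
          have : Finset.Icc (k + 2) (k + 2 + n - 1) = F := by
            rw [hF]; congr 1; omega
          rw [this]; exact hne
      · have hte : n + k + 2 ∉ F.erase t := fun h => hnew (Finset.mem_of_mem_erase h)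
        have hcard : (insert (n + k + 2) (F.erase t)).card = n := by
          rw [Finset.card_insert_of_notMem hte, Finset.card_erase_of_mem ht, hFcard]
          omega
        refine ⟨hcard, ⟨k + 2, by omega, by omega, ?_⟩, ?_⟩
        · intro x hx
          rcases Finset.mem_insert.mp hx with rfl | hx
          · simp [Finset.mem_Icc]; omega
          · have := Finset.mem_of_mem_erase hx
            rw [hF, Finset.mem_Icc] at this
            rw [Finset.mem_Icc]; omega
        · intro j hj2 hjm heq
          have hmem : n + k + 2 ∈ Finset.Icc j (j + n - 1) := by
            rw [← heq]; exact Finset.mem_insert_self _ _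
          rw [Finset.mem_Icc] at hmem; omega
    · rintro ⟨hcard, ⟨i, hi1, hi2, hsub⟩, hj⟩
      by_cases hnS : n + k + 2 ∈ S
      · -- S must be one of the new facets
        have hik : i = k + 2 := by
          have := hsub hnS
          rw [Finset.mem_Icc] at this
          omega
        subst hik
        right
        have hTsub : S.erase (n + k + 2) ⊆ F := by
          intro x hx
          obtain ⟨hxne, hxS⟩ := Finset.mem_erase.mp hx
          have := hsub hxS
          rw [Finset.mem_Icc] at this
          rw [hF, Finset.mem_Icc]; omega
        have hTcard : (S.erase (n + k + 2)).card = n - 1 := by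
          rw [Finset.card_erase_of_mem hnS, hcard]
        have hss : S.erase (n + k + 2) ⊂ F :=
          Finset.ssubset_iff_subset_ne.mpr ⟨hTsub, fun h => by
            rw [h, hFcard] at hTcard; omega⟩
        obtain ⟨t, htF, htT⟩ := Finset.exists_of_ssubset hss
        refine ⟨t, htF, ?_⟩
        have hTeq : F.erase t = S.erase (n + k + 2) := by
          apply (Finset.eq_of_subset_of_card_le ?_ ?_).symm
          · intro x hx
            obtain ⟨hxne, hxS⟩ := Finset.mem_erase.mp hx
            exact Finset.mem_erase.mpr ⟨fun h => htT (h ▸ hx), hTsub hx⟩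
          · rw [Finset.card_erase_of_mem htF, hFcard, hTcard]
        rw [hTeq, Finset.insert_erase hnS]
      · -- S ∈ Delta n (k+1)
        left
        constructor
        · intro heq
          have h1 : Finset.Icc (k + 2) (k + 2 + n - 1) = F := by
            rw [hF]; congr 1; omega
          exact hj (k + 2) (by omega) (by omega) (heq.trans h1.symm)
        · refine IH.mpr ⟨hcard, ⟨min i (k + 1), by omega, by omega, ?_⟩,
            fun j hj2 hjm => hj j hj2 (by omega)⟩
          intro x hx
          have h1 := hsub hx
          rw [Finset.mem_Icc] at h1 ⊢
          have hxne : x ≠ n + k + 2 := fun h => hnS (h ▸ hx)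
          omega
end

section
/- Let n ≥ 3, m ≥ 1, and let i ≠ j be elements of {1, …, n+m}. Then {i, j} is contained in some facet of the explicit stacked sphere Δ_m if and only if |i - j| ≤ n. That is, the 1-skeleton of Δ_m is the graph on {1, …, n+m} in which distinct i, j are adjacent iff |i - j| ≤ n. -/
lemma Delta_one (n : ℕ) : Delta n 1 = (Finset.Icc 1 (n + 1)).powersetCard n := rfl

lemma Delta_succ_succ (n m : ℕ) : Delta n (m + 2) =
    ((Delta n (m + 1)).erase (Finset.Icc (m + 2) (n + m + 1))) ∪
      (Finset.Icc (m + 2) (n + m + 1)).image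
        (fun t => insert (n + m + 2) ((Finset.Icc (m + 2) (n + m + 1)).erase t)) := rfl

lemma exists_mem_not_mem {s t : Finset ℕ} (h : s.card < t.card) : ∃ e ∈ t, e ∉ s := by
  by_contra hc
  push_neg at hc
  exact absurd (Finset.card_le_card fun x hx => hc x hx) (by omega)

lemma Delta_subset_Icc (n : ℕ) :
    ∀ m, ∀ F ∈ Delta n m, ∃ a, F ⊆ Finset.Icc a (a + n) := by
  intro m
  induction m with
  | zero => intro F hF; simp [Delta] at hF
  | succ k ih =>
    match k, ih with
    | 0, _ =>
      intro F hF
      rw [Delta_one, Finset.mem_powersetCard] at hF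
      refine ⟨1, fun x hx => ?_⟩
      have := hF.1 hx
      rw [Finset.mem_Icc] at this ⊢
      omega
    | (l + 1), ih =>
      intro F hF
      rw [Delta_succ_succ] at hF
      rcases Finset.mem_union.1 hF with h | h
      · exact ih F (Finset.mem_of_mem_erase h)
      · rcases Finset.mem_image.1 h with ⟨t, _, rfl⟩
        refine ⟨l + 2, fun x hx => ?_⟩
        rcases Finset.mem_insert.1 hx with rfl | hx
        · rw [Finset.mem_Icc]; omega
        · have := Finset.mem_of_mem_erase hx
          rw [Finset.mem_Icc] at this ⊢
          omega

lemma Delta_edge (n : ℕ) (hn : 3 ≤ n) :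
    ∀ m, 1 ≤ m → ∀ i j, 1 ≤ i → i < j → j ≤ n + m → j ≤ i + n →
      ∃ F ∈ Delta n m, i ∈ F ∧ j ∈ F := by
  intro m
  induction m with
  | zero => intro h; exact absurd h (by omega)
  | succ k ih =>
    match k, ih with
    | 0, _ =>
      intro _ i j hi hij hj _
      have hcard : ({i, j} : Finset ℕ).card < (Finset.Icc 1 (n + 1)).card := by
        rw [Finset.card_pair (Nat.ne_of_lt hij), Nat.card_Icc]
        omega
      obtain ⟨t, htI, htij⟩ := exists_mem_not_mem hcard
      simp only [Finset.mem_insert, Finset.mem_singleton, not_or] at htij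
      refine ⟨(Finset.Icc 1 (n + 1)).erase t, ?_, ?_, ?_⟩
      · rw [Delta_one, Finset.mem_powersetCard]
        refine ⟨Finset.erase_subset _ _, ?_⟩
        rw [Finset.card_erase_of_mem htI, Nat.card_Icc]; omega
      · exact Finset.mem_erase.2 ⟨fun h => htij.1 h.symm, Finset.mem_Icc.2 ⟨hi, by omega⟩⟩
      · exact Finset.mem_erase.2 ⟨fun h => htij.2 h.symm, Finset.mem_Icc.2 ⟨by omega, by omega⟩⟩
    | (l + 1), ih =>
      intro _ i j hi hij hj hjn
      set S := Finset.Icc (l + 2) (n + l + 1) with hS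
      have hScard : S.card = n := by rw [hS, Nat.card_Icc]; omega
      by_cases hj' : j ≤ n + (l + 1)
      · obtain ⟨F, hF, hiF, hjF⟩ := ih (by omega) i j hi hij hj' hjn
        by_cases hFS : F = S
        · subst hFS
          have hcard : ({i, j} : Finset ℕ).card < S.card := by
            rw [Finset.card_pair (Nat.ne_of_lt hij), hScard]; omega
          obtain ⟨t, htS, htij⟩ := exists_mem_not_mem hcard
          simp only [Finset.mem_insert, Finset.mem_singleton, not_or] at htij
          have hiS := Finset.mem_Icc.1 hiF
          have hjS := Finset.mem_Icc.1 hjF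
          refine ⟨insert (n + l + 2) (S.erase t), ?_, ?_, ?_⟩
          · rw [Delta_succ_succ]
            exact Finset.mem_union_right _ (Finset.mem_image.2 ⟨t, htS, rfl⟩)
          · exact Finset.mem_insert_of_mem
              (Finset.mem_erase.2 ⟨fun h => htij.1 h.symm, hiF⟩)
          · exact Finset.mem_insert_of_mem
              (Finset.mem_erase.2 ⟨fun h => htij.2 h.symm, hjF⟩)
        · refine ⟨F, ?_, hiF, hjF⟩
          rw [Delta_succ_succ]
          exact Finset.mem_union_left _ (Finset.mem_erase.2 ⟨hFS, hF⟩)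
      · have hjval : j = n + l + 2 := by omega
        have hiS : i ∈ S := Finset.mem_Icc.2 ⟨by omega, by omega⟩
        have hcard : ({i} : Finset ℕ).card < S.card := by
          rw [Finset.card_singleton, hScard]; omega
        obtain ⟨t, htS, hti⟩ := exists_mem_not_mem hcard
        rw [Finset.mem_singleton] at hti
        refine ⟨insert (n + l + 2) (S.erase t), ?_, ?_, ?_⟩
        · rw [Delta_succ_succ]
          exact Finset.mem_union_right _ (Finset.mem_image.2 ⟨t, htS, rfl⟩)
        · exact Finset.mem_insert_of_mem
            (Finset.mem_erase.2 ⟨fun h => hti h.symm, hiS⟩)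
        · rw [hjval]; exact Finset.mem_insert_self _ _

/-- for distinct `i, j ∈ {1, …, n+m}`, the pair `{i, j}` is
contained in some facet of `Δ_m` iff `|i - j| ≤ n`. -/
theorem delta_skeleton (n m : ℕ) (hn : 3 ≤ n) (hm : 1 ≤ m)
    (i j : ℕ) (hi : i ∈ Finset.Icc 1 (n + m)) (hj : j ∈ Finset.Icc 1 (n + m)) (hij : i ≠ j) :
    (∃ F ∈ Delta n m, ({i, j} : Finset ℕ) ⊆ F) ↔ ((i : ℤ) - (j : ℤ)).natAbs ≤ n := by
  rw [Finset.mem_Icc] at hi hj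
  constructor
  · rintro ⟨F, hF, hsub⟩
    obtain ⟨a, ha⟩ := Delta_subset_Icc n m F hF
    have h1 := Finset.mem_Icc.1 (ha (hsub (Finset.mem_insert_self _ _)))
    have h2 := Finset.mem_Icc.1 (ha (hsub (Finset.mem_insert_of_mem (Finset.mem_singleton_self _))))
    omega
  · intro h
    rcases lt_or_gt_of_ne hij with hlt | hlt
    · obtain ⟨F, hF, hiF, hjF⟩ :=
        Delta_edge n hn m hm i j hi.1 hlt hj.2 (by omega)
      exact ⟨F, hF, Finset.insert_subset hiF (Finset.singleton_subset_iff.2 hjF)⟩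
    · obtain ⟨F, hF, hjF, hiF⟩ :=
        Delta_edge n hn m hm j i hj.1 hlt hi.2 (by omega)
      exact ⟨F, hF, Finset.insert_subset hiF (Finset.singleton_subset_iff.2 hjF)⟩
end

section
/- Let n ≥ 3. In the 1-skeleton of the explicit stacked sphere Δ_{2n+1} (a graph on vertex set {1, …, 3n+1}), the graph distance between vertex i and vertex 2n+1+i equals 3 for every 1 ≤ i ≤ n. Consequently the n pairs of vertices (1, 2n+2), (2, 2n+3), …, (n, 3n+1) may be identified to form an identified stacked sphere. -/
/-- The 1-skeleton of `Δ_m`: two distinct vertices are adjacent iff they lie in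
a common facet of `Δ_m`. -/
def deltaSkeleton (n m : ℕ) : SimpleGraph ℕ :=
  SimpleGraph.fromRel (fun a b => ∃ F ∈ Delta n m, a ∈ F ∧ b ∈ F)

lemma stage1_mem (n : ℕ) (hn : 1 ≤ n) (t : ℕ) (ht1 : 2 ≤ t) (ht2 : t ≤ n+1) :
    ∀ m, (Finset.Icc 1 (n+1)).erase t ∈ Delta n (m+1) := by
  intro m
  induction m with
  | zero =>
    show _ ∈ Delta n 1
    rw [Delta.eq_2, Finset.mem_powersetCard]
    constructor
    · exact Finset.erase_subset _ _
    · rw [Finset.card_erase_of_mem (by simp; omega), Nat.card_Icc]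
      omega
  | succ m ih =>
    show _ ∈ Delta n (m+2)
    rw [Delta.eq_3]
    apply Finset.mem_union_left
    rw [Finset.mem_erase]
    refine ⟨?_, ih⟩
    intro h
    have h1 : (1:ℕ) ∈ (Finset.Icc 1 (n+1)).erase t := by
      rw [Finset.mem_erase, Finset.mem_Icc]; omega
    rw [h, Finset.mem_Icc] at h1
    omega

lemma stage_mem (n : ℕ) (m t M : ℕ) (hM : m+2 ≤ M) (ht1 : m+3 ≤ t) (ht2 : t ≤ n+m+1) :
    insert (n+m+2) ((Finset.Icc (m+2) (n+m+1)).erase t) ∈ Delta n M := by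
  obtain ⟨j, rfl⟩ : ∃ j, M = m+2+j := ⟨M - (m+2), by omega⟩
  clear hM
  induction j with
  | zero =>
    show _ ∈ Delta n (m+2)
    rw [Delta.eq_3]
    apply Finset.mem_union_right
    rw [Finset.mem_image]
    exact ⟨t, by rw [Finset.mem_Icc]; omega, rfl⟩
  | succ j ih =>
    have e : m+2+(j+1) = (m+j+1)+2 := by omega
    rw [e, Delta.eq_3]
    apply Finset.mem_union_left
    rw [Finset.mem_erase]
    have e2 : m+2+j = (m+j+1)+1 := by omega
    rw [e2] at ih
    refine ⟨?_, ih⟩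
    intro h
    have h1 : m+2 ∈ insert (n+m+2) ((Finset.Icc (m+2) (n+m+1)).erase t) := by
      apply Finset.mem_insert_of_mem
      rw [Finset.mem_erase, Finset.mem_Icc]; omega
    rw [h, Finset.mem_Icc] at h1
    omega

lemma stage_mem' (n : ℕ) (hn : 1 ≤ n) (s t M : ℕ) (hs : 2 ≤ s) (hsM : s ≤ M)
    (ht1 : s+1 ≤ t) (ht2 : t+1 ≤ n+s) :
    insert (n+s) ((Finset.Icc s (n+s-1)).erase t) ∈ Delta n M := by
  obtain ⟨m, rfl⟩ : ∃ m, s = m+2 := ⟨s - 2, by omega⟩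
  have e : n+(m+2)-1 = n+m+1 := by omega
  have e2 : n+(m+2) = n+m+2 := by omega
  rw [e, e2]
  exact stage_mem n m t M hsM (by omega) (by omega)

lemma delta_bounded (n : ℕ) : ∀ m, ∀ F ∈ Delta n m, ∃ k, F ⊆ Finset.Icc k (k+n) := by
  intro m
  induction m using Nat.strong_induction_on with
  | _ m ih =>
    match m with
    | 0 => simp [Delta.eq_1]
    | 1 =>
      intro F hF
      rw [Delta.eq_2, Finset.mem_powersetCard] at hF
      exact ⟨1, by rw [Nat.add_comm n 1] at hF; exact hF.1⟩
    | (m+2) =>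
      intro F hF
      rw [Delta.eq_3, Finset.mem_union] at hF
      rcases hF with hF | hF
      · exact ih (m+1) (by omega) F (Finset.mem_of_mem_erase hF)
      · rw [Finset.mem_image] at hF
        obtain ⟨t, _, rfl⟩ := hF
        refine ⟨m+2, ?_⟩
        intro x hx
        rw [Finset.mem_insert] at hx
        rw [Finset.mem_Icc]
        rcases hx with rfl | hx
        · omega
        · rw [Finset.mem_erase, Finset.mem_Icc] at hx
          omega

lemma adj_le (n m : ℕ) {a b : ℕ} (h : (deltaSkeleton n m).Adj a b) : b ≤ a + n := by
  rw [deltaSkeleton, SimpleGraph.fromRel_adj] at h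
  obtain ⟨-, h | h⟩ := h <;>
  · obtain ⟨F, hF, ha, hb⟩ := h
    obtain ⟨k, hk⟩ := delta_bounded n m F hF
    have h1 := hk ha
    have h2 := hk hb
    rw [Finset.mem_Icc] at h1 h2
    omega

lemma walk_bound (n m : ℕ) {a b : ℕ} (w : (deltaSkeleton n m).Walk a b) :
    b ≤ a + n * w.length := by
  induction w with
  | nil => simp
  | @cons a c b h p ih =>
    have := adj_le n m h
    simp only [SimpleGraph.Walk.length_cons]
    have : n * (p.length + 1) = n * p.length + n := by ring
    omega

lemma adj_of_mem (n m : ℕ) {F : Finset ℕ} {a b : ℕ} (hF : F ∈ Delta n m) (ha : a ∈ F)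
    (hb : b ∈ F) (hab : a ≠ b) : (deltaSkeleton n m).Adj a b := by
  rw [deltaSkeleton, SimpleGraph.fromRel_adj]
  exact ⟨hab, Or.inl ⟨F, hF, ha, hb⟩⟩

/-- in the 1-skeleton of `Δ_{2n+1}` the distance between vertex
`i` and vertex `2n+1+i` equals `3` for every `1 ≤ i ≤ n`. -/
theorem delta_dist_three (n : ℕ) (hn : 3 ≤ n) (i : ℕ) (h1 : 1 ≤ i) (h2 : i ≤ n) :
    (deltaSkeleton n (2 * n + 1)).dist i (2 * n + 1 + i) = 3 := by
  set G := deltaSkeleton n (2 * n + 1) with hG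
  -- edge 1 : i ~ n + i
  have e1 : G.Adj i (n + i) := by
    rcases Nat.lt_or_ge i 2 with hi | hi
    · -- i = 1
      have : i = 1 := by omega
      subst this
      refine adj_of_mem n (2*n+1) (stage1_mem n (by omega) 2 le_rfl (by omega) (2*n)) ?_ ?_ (by omega)
      · rw [Finset.mem_erase, Finset.mem_Icc]; omega
      · rw [Finset.mem_erase, Finset.mem_Icc]; omega
    · refine adj_of_mem n (2*n+1)
        (stage_mem' n (by omega) i (i+1) (2*n+1) hi (by omega) le_rfl (by omega)) ?_ ?_ (by omega)
      · apply Finset.mem_insert_of_mem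
        rw [Finset.mem_erase, Finset.mem_Icc]; omega
      · exact Finset.mem_insert_self _ _
  have e2 : G.Adj (n + i) (2*n + i) := by
    refine adj_of_mem n (2*n+1)
      (stage_mem' n (by omega) (n+i) (n+i+1) (2*n+1) (by omega) (by omega) le_rfl (by omega)) ?_ ?_ (by omega)
    · apply Finset.mem_insert_of_mem
      rw [Finset.mem_erase, Finset.mem_Icc]; omega
    · have : 2*n + i = n + (n+i) := by omega
      rw [this]; exact Finset.mem_insert_self _ _
  have e3 : G.Adj (2*n + i) (2*n + 1 + i) := by
    refine adj_of_mem n (2*n+1)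
      (stage_mem' n (by omega) (n+i+1) (n+i+2) (2*n+1) (by omega) (by omega) le_rfl (by omega)) ?_ ?_ (by omega)
    · apply Finset.mem_insert_of_mem
      rw [Finset.mem_erase, Finset.mem_Icc]; omega
    · have : 2*n + 1 + i = n + (n+i+1) := by omega
      rw [this]; exact Finset.mem_insert_self _ _
  have hub : G.dist i (2*n+1+i) ≤ 3 := by
    have h := SimpleGraph.dist_le
      (SimpleGraph.Walk.cons e1 (SimpleGraph.Walk.cons e2 (SimpleGraph.Walk.cons e3 SimpleGraph.Walk.nil)))
    simp only [SimpleGraph.Walk.length_cons, SimpleGraph.Walk.length_nil] at h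
    omega
  have hr : G.Reachable i (2*n+1+i) :=
    ⟨SimpleGraph.Walk.cons e1 (SimpleGraph.Walk.cons e2 (SimpleGraph.Walk.cons e3 SimpleGraph.Walk.nil))⟩
  obtain ⟨p, hp⟩ := hr.exists_walk_length_eq_dist
  have hlb := walk_bound n (2*n+1) p
  rw [hp] at hlb
  set d := G.dist i (2*n+1+i)
  have : 3 ≤ d := by
    by_contra hcon
    push_neg at hcon
    have : n * d ≤ n * 2 := Nat.mul_le_mul_left n (by omega)
    omega
  omega
end

section
/- Let n ≥ 3 and let q : {1, …, 3n+1} → ℤ/(2n+1) be reduction modulo 2n+1 (so q(2n+1+i) = q(i) for 1 ≤ i ≤ n, i.e., q identifies the pairs (1, 2n+2), …, (n, 3n+1)). Then q is injective on every facet of the explicit stacked sphere Δ_{2n+1}, and the collection { q(F) : F a facet of Δ_{2n+1}, F ≠ {1, …, n}, F ≠ {2n+2, …, 3n+1} } is exactly the set of facets of Kühnel's complex K_n. That is, the minimal identified stacked sphere M^n obtained from Δ_{2n+1} by this identification has as its facets all n-element subsets of the 2n+1 cyclic translates of {1, …, n+1} modulo 2n+1, other than those which are cyclically consecutive. -/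
/-- `S` is a facet of Kühnel's complex `K_n` on vertex set `ℤ/(2n+1)`: `S` is an
`n`-element subset of some cyclic interval `{a, a+1, …, a+n}` which is not a
cyclic interval `{b, b+1, …, b+n-1}`. -/
def KuhnelFacet (n : ℕ) (S : Finset (ZMod (2 * n + 1))) : Prop :=
  S.card = n ∧
    (∃ a : ZMod (2 * n + 1), S ⊆ (Finset.range (n + 1)).image (fun k : ℕ => a + (k : ZMod (2 * n + 1)))) ∧
    (∀ b : ZMod (2 * n + 1), S ≠ (Finset.range n).image (fun k : ℕ => b + (k : ZMod (2 * n + 1))))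

lemma exists_erase {α : Type*} [DecidableEq α] {T W : Finset α} (h : T ⊆ W)
    (hc : T.card + 1 = W.card) : ∃ t ∈ W, T = W.erase t := by
  have h1 : (W \ T).card = 1 := by
    rw [Finset.card_sdiff_of_subset h]; omega
  obtain ⟨t, ht⟩ := Finset.card_eq_one.mp h1
  refine ⟨t, ?_, ?_⟩
  · have : t ∈ W \ T := ht ▸ Finset.mem_singleton_self t
    exact (Finset.mem_sdiff.mp this).1
  · rw [Finset.erase_eq, ← ht, Finset.sdiff_sdiff_self_left]
    exact (Finset.inter_eq_right.mpr h).symm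

lemma cast_inj_aux (n : ℕ) {a x y : ℕ} (hx : x ∈ Finset.Icc a (a+n)) (hy : y ∈ Finset.Icc a (a+n))
    (h : (x : ZMod (2*n+1)) = y) : x = y := by
  simp only [Finset.mem_Icc] at hx hy
  rw [ZMod.natCast_eq_natCast_iff] at h
  rcases le_total x y with hle | hle
  · have hd := (Nat.modEq_iff_dvd' hle).mp h
    rcases Nat.eq_zero_or_pos (y - x) with h0 | hp
    · omega
    · have := Nat.le_of_dvd hp hd; omega
  · have hd := (Nat.modEq_iff_dvd' hle).mp h.symm
    rcases Nat.eq_zero_or_pos (x - y) with h0 | hp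
    · omega
    · have := Nat.le_of_dvd hp hd; omega

lemma icc_image_cast (n a L : ℕ) :
    (Finset.Icc a (a + L)).image (fun x : ℕ => (x : ZMod (2*n+1))) =
      (Finset.range (L+1)).image (fun k : ℕ => (a : ZMod (2*n+1)) + k) := by
  ext y
  simp only [Finset.mem_image, Finset.mem_Icc, Finset.mem_range]
  constructor
  · rintro ⟨x, ⟨h1, h2⟩, rfl⟩
    refine ⟨x - a, by omega, ?_⟩
    rw [eq_comm, ← Nat.cast_add]
    exact congrArg _ (by omega)
  · rintro ⟨k, hk, rfl⟩
    exact ⟨a + k, ⟨by omega, by omega⟩, by push_cast; ring⟩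

lemma icc_n_image (n b : ℕ) (hn : 1 ≤ n) :
    (Finset.Icc b (b + n - 1)).image (fun x : ℕ => (x : ZMod (2*n+1))) =
      (Finset.range n).image (fun k : ℕ => (b : ZMod (2*n+1)) + k) := by
  have h1 : b + n - 1 = b + (n-1) := by omega
  rw [h1, icc_image_cast]
  have h2 : n - 1 + 1 = n := by omega
  rw [h2]

lemma delta_char (n : ℕ) (hn : 1 ≤ n) (m : ℕ) (hm : 1 ≤ m) (S : Finset ℕ) :
    S ∈ Delta n m ↔ S.card = n ∧ (∃ a, 1 ≤ a ∧ a ≤ m ∧ S ⊆ Finset.Icc a (a + n)) ∧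
      ∀ b, 2 ≤ b → b ≤ m → S ≠ Finset.Icc b (b + n - 1) := by
  induction m, hm using Nat.le_induction generalizing S with
  | base =>
    simp only [Delta, Finset.mem_powersetCard]
    constructor
    · rintro ⟨hsub, hcard⟩
      exact ⟨hcard, ⟨1, le_refl 1, le_refl 1, by rwa [Nat.add_comm 1 n]⟩, by intro b h2 h1; omega⟩
    · rintro ⟨hcard, ⟨a, ha1, ha2, hsub⟩, -⟩
      have : a = 1 := by omega
      subst this
      exact ⟨by rwa [Nat.add_comm n 1]; , hcard⟩
  | succ m hm ih =>
    obtain ⟨k, rfl⟩ : ∃ k, m = k + 1 := ⟨m - 1, by omega⟩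
    have hmem : S ∈ Delta n (k + 1 + 1) ↔
        S ∈ ((Delta n (k + 1)).erase (Finset.Icc (k + 2) (n + k + 1))) ∪
          (Finset.Icc (k + 2) (n + k + 1)).image
            (fun t => insert (n + k + 2) ((Finset.Icc (k + 2) (n + k + 1)).erase t)) := Iff.rfl
    rw [hmem, Finset.mem_union, Finset.mem_erase, Finset.mem_image]
    constructor
    · rintro (⟨hne, hS⟩ | ⟨t, ht, rfl⟩)
      · obtain ⟨hcard, ⟨a, ha1, ha2, hsub⟩, hb⟩ := (ih S).mp hS
        refine ⟨hcard, ⟨a, ha1, by omega, hsub⟩, ?_⟩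
        intro b hb2 hbm
        rcases eq_or_lt_of_le hbm with heq | hlt
        · subst heq
          intro hSe; apply hne
          rw [hSe]; congr 1; omega
        · exact hb b hb2 (by omega)
      · simp only [Finset.mem_Icc] at ht
        have hni : n + k + 2 ∉ (Finset.Icc (k + 2) (n + k + 1)).erase t := by
          simp only [Finset.mem_erase, Finset.mem_Icc]; omega
        refine ⟨?_, ⟨k + 2, by omega, by omega, ?_⟩, ?_⟩
        · rw [Finset.card_insert_of_notMem hni,
            Finset.card_erase_of_mem (by simp only [Finset.mem_Icc]; omega), Nat.card_Icc]
          omega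
        · intro x hx
          simp only [Finset.mem_insert, Finset.mem_erase, Finset.mem_Icc] at hx ⊢
          omega
        · intro b hb2 hbm hSe
          have hmem2 : n + k + 2 ∈ Finset.Icc b (b + n - 1) := by
            rw [← hSe]; exact Finset.mem_insert_self _ _
          simp only [Finset.mem_Icc] at hmem2; omega
    · rintro ⟨hcard, ⟨a, ha1, ha2, hsub⟩, hb⟩
      by_cases htop : n + k + 2 ∈ S
      · right
        have ha : a = k + 2 := by
          have := hsub htop; simp only [Finset.mem_Icc] at this; omega
        subst ha
        have hsub' : S.erase (n + k + 2) ⊆ Finset.Icc (k + 2) (n + k + 1) := by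
          intro x hx
          obtain ⟨hx1, hx2⟩ := Finset.mem_erase.mp hx
          have := hsub hx2; simp only [Finset.mem_Icc] at this ⊢; omega
        have hcard' : (S.erase (n + k + 2)).card + 1 = (Finset.Icc (k + 2) (n + k + 1)).card := by
          rw [Finset.card_erase_of_mem htop, Nat.card_Icc]; omega
        obtain ⟨t, ht, hte⟩ := exists_erase hsub' hcard'
        exact ⟨t, ht, by rw [← hte, Finset.insert_erase htop]⟩
      · left
        constructor
        · intro hSe; exact hb (k + 2) (by omega) (by omega) (by rw [hSe]; congr 1; omega)
        · apply (ih S).mpr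
          refine ⟨hcard, ?_, fun b h1 h2 => hb b h1 (by omega)⟩
          by_cases ha' : a ≤ k + 1
          · exact ⟨a, ha1, ha', hsub⟩
          · have ha2' : a = k + 2 := by omega
            subst ha2'
            refine ⟨k + 1, by omega, le_refl _, ?_⟩
            intro x hx
            have h1 := hsub hx
            have h2 : x ≠ n + k + 2 := fun h => htop (h ▸ hx)
            simp only [Finset.mem_Icc] at h1 ⊢
            omega

/-- reduction `q` modulo `2n+1` is injective on every facet of
`Δ_{2n+1}`, and the images of the facets other than the two identified facets
`{1, …, n}` and `{2n+2, …, 3n+1}` are exactly the facets of Kühnel's complex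
`K_n`; i.e. the MISS `Mⁿ` obtained from `Δ_{2n+1}` by identifying the pairs
`(i, 2n+1+i)`, `1 ≤ i ≤ n`, has precisely the facets of `K_n`. -/
theorem miss_facets_eq_kuhnel (n : ℕ) (hn : 3 ≤ n) :
    (∀ F ∈ Delta n (2 * n + 1), Set.InjOn (fun x : ℕ => (x : ZMod (2 * n + 1))) ↑F) ∧
    (∀ S : Finset (ZMod (2 * n + 1)),
      (∃ F ∈ Delta n (2 * n + 1), F ≠ Finset.Icc 1 n ∧ F ≠ Finset.Icc (2 * n + 2) (3 * n + 1) ∧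
          S = F.image (fun x : ℕ => (x : ZMod (2 * n + 1)))) ↔
        KuhnelFacet n S) := by
  have hn1 : 1 ≤ n := by omega
  have hm1 : 1 ≤ 2 * n + 1 := by omega
  have injW : ∀ a : ℕ, Set.InjOn (fun x : ℕ => (x : ZMod (2 * n + 1))) ↑(Finset.Icc a (a + n)) := by
    intro a x hx y hy h
    exact cast_inj_aux n (Finset.mem_coe.mp hx) (Finset.mem_coe.mp hy) h
  have injF : ∀ F ∈ Delta n (2 * n + 1), Set.InjOn (fun x : ℕ => (x : ZMod (2 * n + 1))) ↑F := by
    intro F hF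
    obtain ⟨-, ⟨a, -, -, hsub⟩, -⟩ := (delta_char n hn1 (2 * n + 1) hm1 F).mp hF
    exact (injW a).mono (Finset.coe_subset.mpr hsub)
  refine ⟨injF, fun S => ⟨?_, ?_⟩⟩
  · rintro ⟨F, hF, hF1, hF2, rfl⟩
    obtain ⟨hcard, ⟨a, ha1, ha2, hsub⟩, hne⟩ := (delta_char n hn1 (2 * n + 1) hm1 F).mp hF
    have hFne : ∀ b : ℕ, 1 ≤ b → b ≤ 2 * n + 2 → F ≠ Finset.Icc b (b + n - 1) := by
      intro b h1 h2
      by_cases hb1 : b = 1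
      · subst hb1
        rw [show 1 + n - 1 = n from by omega]
        exact hF1
      · by_cases hbt : b = 2 * n + 2
        · subst hbt
          rw [show 2 * n + 2 + n - 1 = 3 * n + 1 from by omega]
          exact hF2
        · exact hne b (by omega) (by omega)
    have hinj := (injW a).mono (Finset.coe_subset.mpr hsub)
    refine ⟨?_, ⟨((a : ℕ) : ZMod (2 * n + 1)), ?_⟩, ?_⟩
    · rw [Finset.card_image_of_injOn hinj, hcard]
    · rw [← icc_image_cast n a n]
      exact Finset.image_subset_image hsub
    · intro b hb
      have hWcard : (Finset.Icc a (a + n)).card = n + 1 := by rw [Nat.card_Icc]; omega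
      obtain ⟨t, ht, hFe⟩ := exists_erase hsub (by omega)
      simp only [Finset.mem_Icc] at ht
      by_cases hta : t = a
      · subst hta
        exact hFne (t + 1) (by omega) (by omega)
          (by rw [hFe]; ext x; simp only [Finset.mem_erase, Finset.mem_Icc]; omega)
      · by_cases htn : t = a + n
        · exact hFne a (by omega) (by omega)
            (by rw [hFe]; ext x; subst htn; simp only [Finset.mem_erase, Finset.mem_Icc]; omega)
        · have haF : a ∈ F := by
            rw [hFe]
            exact Finset.mem_erase.mpr ⟨fun h => hta h.symm, by simp only [Finset.mem_Icc]; omega⟩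
          have hanF : a + n ∈ F := by
            rw [hFe]
            exact Finset.mem_erase.mpr ⟨fun h => htn h.symm, by simp only [Finset.mem_Icc]; omega⟩
          have h1 := Finset.mem_image_of_mem (fun x : ℕ => (x : ZMod (2 * n + 1))) haF
          have h2 := Finset.mem_image_of_mem (fun x : ℕ => (x : ZMod (2 * n + 1))) hanF
          rw [hb] at h1 h2
          simp only [Finset.mem_image, Finset.mem_range] at h1 h2
          obtain ⟨j, hj, hje⟩ := h1
          obtain ⟨j', hj', hje'⟩ := h2
          have key : ((j + n : ℕ) : ZMod (2 * n + 1)) = ((j' : ℕ) : ZMod (2 * n + 1)) := by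
            push_cast at hje' ⊢
            linear_combination hje - hje'
          rw [ZMod.natCast_eq_natCast_iff] at key
          unfold Nat.ModEq at key
          rw [Nat.mod_eq_of_lt (by omega), Nat.mod_eq_of_lt (by omega)] at key
          omega
  · rintro ⟨hScard, ⟨a, hSsub⟩, hSnot⟩
    obtain ⟨a0, ha0, ha0ge, ha0le⟩ :
        ∃ a0 : ℕ, ((a0 : ℕ) : ZMod (2 * n + 1)) = a ∧ 1 ≤ a0 ∧ a0 ≤ 2 * n + 1 := by
      refine ⟨(a - 1).val + 1, ?_, by omega, ?_⟩
      · push_cast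
        rw [ZMod.natCast_val, ZMod.cast_id]
        ring
      · have := ZMod.val_lt (a - 1); omega
    classical
    set F : Finset ℕ := (Finset.Icc a0 (a0 + n)).filter (fun x => (x : ZMod (2 * n + 1)) ∈ S)
      with hFdef
    have hFsub : F ⊆ Finset.Icc a0 (a0 + n) := Finset.filter_subset _ _
    have himg : F.image (fun x : ℕ => (x : ZMod (2 * n + 1))) = S := by
      ext s
      simp only [hFdef, Finset.mem_image, Finset.mem_filter, Finset.mem_Icc]
      constructor
      · rintro ⟨x, ⟨-, hxS⟩, rfl⟩; exact hxS
      · intro hs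
        have hw := hSsub hs
        simp only [Finset.mem_image, Finset.mem_range] at hw
        obtain ⟨k, hk, hks⟩ := hw
        have he : ((a0 + k : ℕ) : ZMod (2 * n + 1)) = s := by push_cast; rw [ha0]; exact hks
        exact ⟨a0 + k, ⟨⟨by omega, by omega⟩, by rw [he]; exact hs⟩, he⟩
    have hinj := (injW a0).mono (Finset.coe_subset.mpr hFsub)
    have hFcard : F.card = n := by
      have hc := Finset.card_image_of_injOn hinj
      rw [himg, hScard] at hc
      exact hc.symm
    have hFne : ∀ b : ℕ, F ≠ Finset.Icc b (b + n - 1) := by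
      intro b hFb
      apply hSnot ((b : ℕ) : ZMod (2 * n + 1))
      rw [← himg, hFb, icc_n_image n b hn1]
    refine ⟨F, (delta_char n hn1 (2 * n + 1) hm1 F).mpr
      ⟨hFcard, ⟨a0, ha0ge, ha0le, hFsub⟩, fun b _ _ => hFne b⟩, ?_, ?_, himg.symm⟩
    · have h := hFne 1
      rwa [show 1 + n - 1 = n from by omega] at h
    · have h := hFne (2 * n + 2)
      rwa [show 2 * n + 2 + n - 1 = 3 * n + 1 from by omega] at h
end

section
/- Let n ≥ 3. Every 2-element subset of ℤ/(2n+1) is contained in some facet of Kühnel's complex K_n; in other words, the 1-skeleton of K_n is the complete graph on its 2n+1 vertices, so K_n has exactly C(2n+1, 2) = n·(2n+1) edges. -/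
lemma zmod_cast_inj (n : ℕ) {i j : ℕ} (hi : i < 2 * n + 1) (hj : j < 2 * n + 1)
    (h : (i : ZMod (2 * n + 1)) = (j : ZMod (2 * n + 1))) : i = j := by
  have := congrArg ZMod.val h
  rwa [ZMod.val_natCast_of_lt hi, ZMod.val_natCast_of_lt hj] at this

lemma facet_of_pair (n : ℕ) (hn : 3 ≤ n) (a : ZMod (2 * n + 1)) (k : ℕ)
    (hk1 : 1 ≤ k) (hkn : k ≤ n) :
    ∃ F, KuhnelFacet n F ∧ ({a, a + (k : ZMod (2 * n + 1))} : Finset (ZMod (2 * n + 1))) ⊆ F := by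
  set m : ℕ := if k = 1 then 1 else 0 with hm
  have hm2 : m + 2 ≤ n := by rcases eq_or_ne k 1 with h | h <;> simp [hm, h] <;> omega
  have hmk : m + 1 ≠ k := by rcases eq_or_ne k 1 with h | h <;> simp [hm, h] <;> omega
  set I : Finset (ZMod (2 * n + 1)) :=
    (Finset.range (n + 1)).image (fun i : ℕ => a + (i : ZMod (2 * n + 1))) with hI
  have hinj : Set.InjOn (fun i : ℕ => a + (i : ZMod (2 * n + 1))) (Finset.range (n + 1)) := by
    intro i hi j hj hij
    simp only [Finset.coe_range, Set.mem_Iio] at hi hj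
    have : (i : ZMod (2 * n + 1)) = (j : ZMod (2 * n + 1)) := by
      have := hij; simpa using this
    exact zmod_cast_inj n (by omega) (by omega) this
  have hcardI : I.card = n + 1 := by
    rw [hI, Finset.card_image_of_injOn hinj, Finset.card_range]
  have hmemI : ∀ i : ℕ, i ≤ n → a + (i : ZMod (2 * n + 1)) ∈ I := by
    intro i hi
    exact Finset.mem_image_of_mem _ (Finset.mem_range.mpr (by omega))
  have hne : ∀ i j : ℕ, i ≤ n → j ≤ n → i ≠ j →
      a + (i : ZMod (2 * n + 1)) ≠ a + (j : ZMod (2 * n + 1)) := by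
    intro i j hi hj hij h
    apply hij
    exact zmod_cast_inj n (by omega) (by omega) (by
      have := add_left_cancel h; exact this)
  set F : Finset (ZMod (2 * n + 1)) := I.erase (a + ((m + 1 : ℕ) : ZMod (2 * n + 1))) with hF
  refine ⟨F, ⟨?_, ⟨a, ?_⟩, ?_⟩, ?_⟩
  · rw [hF, Finset.card_erase_of_mem (hmemI (m + 1) (by omega)), hcardI]
    omega
  · exact Finset.erase_subset _ _
  · -- not an interval of length n
    intro b hb
    have h1 : a + ((m : ℕ) : ZMod (2 * n + 1)) ∈ F := by
      rw [hF]
      exact Finset.mem_erase.mpr ⟨hne m (m + 1) (by omega) (by omega) (by omega),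
        hmemI m (by omega)⟩
    have h3 : a + ((m + 2 : ℕ) : ZMod (2 * n + 1)) ∈ F := by
      rw [hF]
      exact Finset.mem_erase.mpr ⟨hne (m + 2) (m + 1) (by omega) (by omega) (by omega),
        hmemI (m + 2) hm2⟩
    have h2 : a + ((m + 1 : ℕ) : ZMod (2 * n + 1)) ∉ F := Finset.notMem_erase _ _
    rw [hb] at h1 h3 h2
    obtain ⟨i, hi, hi'⟩ := Finset.mem_image.mp h1
    obtain ⟨j, hj, hj'⟩ := Finset.mem_image.mp h3
    simp only [Finset.mem_range] at hi hj
    have hbj : b + ((j : ℕ) : ZMod (2 * n + 1)) = b + (((i + 2 : ℕ)) : ZMod (2 * n + 1)) := by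
      push_cast at hj' hi' ⊢
      linear_combination hj' - hi'
    have hj2 : j = i + 2 := zmod_cast_inj n (by omega) (by omega) (add_left_cancel hbj)
    apply h2
    apply Finset.mem_image.mpr
    refine ⟨i + 1, Finset.mem_range.mpr (by omega), ?_⟩
    have : b + ((i + 1 : ℕ) : ZMod (2 * n + 1)) = b + (i : ZMod (2 * n + 1)) + 1 := by
      push_cast; ring
    rw [this, hi']
    push_cast; ring
  · -- {a, a + k} ⊆ F
    have ha : a ∈ F := by
      rw [hF]
      refine Finset.mem_erase.mpr ⟨?_, ?_⟩
      · have := hne 0 (m + 1) (by omega) (by omega) (by omega)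
        simpa using this
      · have := hmemI 0 (by omega); simpa using this
    have hak : a + (k : ZMod (2 * n + 1)) ∈ F := by
      rw [hF]
      exact Finset.mem_erase.mpr ⟨hne k (m + 1) hkn (by omega) (by omega), hmemI k hkn⟩
    intro x hx
    simp only [Finset.mem_insert, Finset.mem_singleton] at hx
    rcases hx with rfl | rfl
    · exact ha
    · exact hak

open scoped Classical in
/-- every 2-element subset of `ℤ/(2n+1)` is contained in some
facet of `K_n`, so the 1-skeleton of `K_n` is complete and `K_n` has exactly
`C(2n+1, 2) = n·(2n+1)` edges. -/
theorem kuhnel_skeleton_complete (n : ℕ) (hn : 3 ≤ n) :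
    (∀ e : Finset (ZMod (2 * n + 1)), e.card = 2 → ∃ F, KuhnelFacet n F ∧ e ⊆ F) ∧
    (Finset.univ.filter
        (fun e : Finset (ZMod (2 * n + 1)) => e.card = 2 ∧ ∃ F, KuhnelFacet n F ∧ e ⊆ F)).card
      = Nat.choose (2 * n + 1) 2 ∧
    Nat.choose (2 * n + 1) 2 = n * (2 * n + 1) := by
  have hmain : ∀ e : Finset (ZMod (2 * n + 1)), e.card = 2 → ∃ F, KuhnelFacet n F ∧ e ⊆ F := by
    intro e he
    obtain ⟨x, y, hxy, rfl⟩ := Finset.card_eq_two.mp he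
    have hNZ : NeZero (2 * n + 1) := ⟨by omega⟩
    set d : ZMod (2 * n + 1) := y - x with hd
    have hd0 : d ≠ 0 := sub_ne_zero.mpr (Ne.symm hxy)
    have hdval : d.val < 2 * n + 1 := ZMod.val_lt d
    have hdval0 : 0 < d.val := Nat.pos_of_ne_zero (fun h => hd0 (by
      rwa [← ZMod.val_eq_zero] ))
    have hcast : ((d.val : ℕ) : ZMod (2 * n + 1)) = d := by
      simp [ZMod.natCast_val, ZMod.cast_id]
    by_cases hle : d.val ≤ n
    · obtain ⟨F, hF, hsub⟩ := facet_of_pair n hn x d.val hdval0 hle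
      refine ⟨F, hF, ?_⟩
      have : x + ((d.val : ℕ) : ZMod (2 * n + 1)) = y := by
        rw [hcast, hd]; ring
      rwa [this] at hsub
    · obtain ⟨F, hF, hsub⟩ := facet_of_pair n hn y (2 * n + 1 - d.val) (by omega) (by omega)
      refine ⟨F, hF, ?_⟩
      have hcast2 : ((2 * n + 1 - d.val : ℕ) : ZMod (2 * n + 1)) = -d := by
        have : ((2 * n + 1 - d.val : ℕ) : ZMod (2 * n + 1))
            = ((2 * n + 1 : ℕ) : ZMod (2 * n + 1)) - ((d.val : ℕ) : ZMod (2 * n + 1)) := by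
          rw [Nat.cast_sub (by omega)]
        rw [this, hcast]
        simp [ZMod.natCast_self]
      have : y + ((2 * n + 1 - d.val : ℕ) : ZMod (2 * n + 1)) = x := by
        rw [hcast2, hd]; ring
      rw [this] at hsub
      intro z hz
      apply hsub
      simp only [Finset.mem_insert, Finset.mem_singleton] at hz ⊢
      tauto
  refine ⟨hmain, ?_, ?_⟩
  · have heq : (Finset.univ.filter
        (fun e : Finset (ZMod (2 * n + 1)) => e.card = 2 ∧ ∃ F, KuhnelFacet n F ∧ e ⊆ F))
        = Finset.powersetCard 2 (Finset.univ : Finset (ZMod (2 * n + 1))) := by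
      ext e
      simp only [Finset.mem_filter, Finset.mem_univ, true_and, Finset.mem_powersetCard]
      constructor
      · rintro ⟨h, -⟩; exact ⟨Finset.subset_univ e, h⟩
      · rintro ⟨-, h⟩; exact ⟨h, hmain e h⟩
    rw [heq, Finset.card_powersetCard, Finset.card_univ, ZMod.card]
  · rw [Nat.choose_two_right]
    have h1 : 2 * n + 1 - 1 = 2 * n := by omega
    rw [h1]
    have h2 : (2 * n + 1) * (2 * n) = n * (2 * n + 1) * 2 := by ring
    rw [h2]
    exact Nat.mul_div_cancel _ (by omega)
end

section
/- Let n ≥ 3 and f_0 ≥ 2n+1, and let q : {1, …, f_0+n} → ℤ/f_0 be reduction modulo f_0 (so q identifies the pairs (1, f_0+1), …, (n, f_0+n)). Let M = { q(F) : F a facet of the explicit stacked sphere Δ_{f_0}, F ≠ {1, …, n}, F ≠ {f_0+1, …, f_0+n} } be the resulting identified stacked sphere. Then a 2-element subset {a, b} of ℤ/f_0 is contained in some member of M if and only if a - b ∈ {±1, ±2, …, ±n} in ℤ/f_0; consequently M has exactly f_0 vertices and exactly n·f_0 edges. -/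
lemma mem_powerset_card_succ {α : Type*} [DecidableEq α] (s : Finset α) (n : ℕ)
    (hs : s.card = n + 1) (F : Finset α) :
    F ∈ s.powersetCard n ↔ ∃ t ∈ s, F = s.erase t := by
  rw [Finset.mem_powersetCard]
  constructor
  · rintro ⟨hsub, hcard⟩
    have h : (s \ F).card = 1 := by
      rw [Finset.card_sdiff_of_subset hsub, hs, hcard]; omega
    obtain ⟨t, ht⟩ := Finset.card_eq_one.mp h
    have htm : t ∈ s \ F := ht ▸ Finset.mem_singleton_self t
    rw [Finset.mem_sdiff] at htm
    refine ⟨t, htm.1, ?_⟩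
    refine Finset.eq_of_subset_of_card_le ?_ ?_
    · intro x hx
      exact Finset.mem_erase.mpr ⟨fun h => htm.2 (h ▸ hx), hsub hx⟩
    · rw [Finset.card_erase_of_mem htm.1, hs, hcard]; omega
  · rintro ⟨t, ht, rfl⟩
    exact ⟨Finset.erase_subset _ _, by rw [Finset.card_erase_of_mem ht, hs]; omega⟩

lemma facet_insert (n m t : ℕ) (h1 : m + 2 ≤ t) (h2 : t ≤ n + m + 1) :
    insert (n + m + 2) ((Finset.Icc (m + 2) (n + m + 1)).erase t)
      = (Finset.Icc (m + 2) (n + m + 2)).erase t := by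
  ext x
  simp only [Finset.mem_insert, Finset.mem_erase, Finset.mem_Icc]
  omega

lemma erase_bot (i b : ℕ) (h : i ≤ b) :
    (Finset.Icc i b).erase i = Finset.Icc (i + 1) b := by
  ext x
  simp only [Finset.mem_erase, Finset.mem_Icc]
  omega

lemma delta_mem (n : ℕ) : ∀ m, 1 ≤ m → ∀ F : Finset ℕ,
    (F ∈ Delta n m ↔ ∃ i t, 1 ≤ i ∧ i ≤ m ∧ i ≤ t ∧ t ≤ n + i ∧
      (i < m → i + 1 ≤ t) ∧ (2 ≤ i → t ≤ n + i - 1) ∧ F = (Finset.Icc i (n + i)).erase t) := by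
  intro m
  induction m with
  | zero => omega
  | succ m ih =>
    intro _ F
    match m, ih with
    | 0, _ =>
      rw [show Delta n 1 = (Finset.Icc 1 (n + 1)).powersetCard n from rfl,
        mem_powerset_card_succ _ n (by rw [Nat.card_Icc]; omega)]
      constructor
      · rintro ⟨t, ht, rfl⟩
        rw [Finset.mem_Icc] at ht
        exact ⟨1, t, by omega, by omega, by omega, by omega, by omega, by omega, rfl⟩
      · rintro ⟨i, t, h1, h2, h3, h4, -, -, rfl⟩
        have : i = 1 := by omega
        subst this
        exact ⟨t, Finset.mem_Icc.mpr (by omega), rfl⟩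
    | (k+1), ih =>
      rw [show Delta n (k+2) = ((Delta n (k + 1)).erase (Finset.Icc (k + 2) (n + k + 1))) ∪
        (Finset.Icc (k + 2) (n + k + 1)).image
          (fun t => insert (n + k + 2) ((Finset.Icc (k + 2) (n + k + 1)).erase t)) from rfl]
      rw [Finset.mem_union, Finset.mem_erase, ih (by omega)]
      constructor
      · rintro (⟨hne, i, t, h1, h2, h3, h4, h5, h6, rfl⟩ | h)
        · refine ⟨i, t, h1, by omega, h3, h4, ?_, h6, rfl⟩
          intro hi
          rcases Nat.lt_or_ge i (k + 1) with hi' | hi'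
          · exact h5 hi'
          · by_contra hlt
            have hti : t = i := by omega
            have hik : i = k + 1 := by omega
            apply hne
            rw [hti, erase_bot _ _ (by omega), hik]
            have h' : n + (k + 1) = n + k + 1 := by omega
            rw [h']
        · simp only [Finset.mem_image, Finset.mem_Icc] at h
          obtain ⟨t, ht, rfl⟩ := h
          rw [facet_insert n k t ht.1 ht.2]
          exact ⟨k + 2, t, by omega, by omega, by omega, by omega, by omega, by omega, rfl⟩
      · rintro ⟨i, t, h1, h2, h3, h4, h5, h6, rfl⟩
        rcases Nat.lt_or_ge i (k + 2) with hi | hi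
        · left
          have ht2 : i + 1 ≤ t := h5 hi
          refine ⟨?_, i, t, h1, by omega, h3, h4, fun _ => ht2, h6, rfl⟩
          intro hEq
          have : i ∈ (Finset.Icc i (n + i)).erase t :=
            Finset.mem_erase.mpr ⟨by omega, Finset.mem_Icc.mpr (by omega)⟩
          rw [hEq, Finset.mem_Icc] at this
          omega
        · right
          have hik : i = k + 2 := by omega
          subst hik
          have ht6 : t ≤ n + (k + 2) - 1 := h6 (by omega)
          simp only [Finset.mem_image, Finset.mem_Icc]
          refine ⟨t, ⟨h3, by omega⟩, ?_⟩
          rw [facet_insert n k t h3 (by omega)]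
          rfl

lemma erased_mem (n f0 : ℕ) (hn : 3 ≤ n) (hf0 : 2 * n + 1 ≤ f0) (F : Finset ℕ) :
    F ∈ (((Delta n f0).erase (Finset.Icc 1 n)).erase (Finset.Icc (f0 + 1) (f0 + n))) ↔
      ∃ i t, 1 ≤ i ∧ i ≤ f0 ∧ i + 1 ≤ t ∧ t ≤ n + i - 1 ∧
        F = (Finset.Icc i (n + i)).erase t := by
  rw [Finset.mem_erase, Finset.mem_erase, delta_mem n f0 (by omega)]
  constructor
  · rintro ⟨hne2, hne1, i, t, h1, h2, h3, h4, h5, h6, rfl⟩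
    refine ⟨i, t, h1, h2, ?_, ?_, rfl⟩
    · rcases Nat.lt_or_ge i f0 with hi | hi
      · exact h5 hi
      · -- i = f0, need t ≠ i
        by_contra hlt
        have hti : t = i := by omega
        have hif : i = f0 := by omega
        apply hne2
        rw [hti, erase_bot _ _ (by omega), hif]
        have : n + f0 = f0 + n := by omega
        rw [this]
    · rcases Nat.lt_or_ge 1 i with hi | hi
      · exact h6 hi
      · -- i = 1, need t ≠ n + 1
        by_contra hlt
        have hti : t = n + 1 := by omega
        have hi1 : i = 1 := by omega
        apply hne1
        subst hti hi1
        ext x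
        simp only [Finset.mem_erase, Finset.mem_Icc]
        omega
  · rintro ⟨i, t, h1, h2, h3, h4, rfl⟩
    have hmemi : i ∈ (Finset.Icc i (n + i)).erase t :=
      Finset.mem_erase.mpr ⟨by omega, Finset.mem_Icc.mpr (by omega)⟩
    have hmemn : n + i ∈ (Finset.Icc i (n + i)).erase t :=
      Finset.mem_erase.mpr ⟨by omega, Finset.mem_Icc.mpr (by omega)⟩
    refine ⟨?_, ?_, i, t, h1, h2, by omega, by omega, by omega, by omega, rfl⟩
    · intro hEq
      rw [hEq, Finset.mem_Icc] at hmemi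
      omega
    · intro hEq
      rw [hEq, Finset.mem_Icc] at hmemn
      omega

lemma cast_ne_zero (f0 k : ℕ) (hk : 1 ≤ k) (hkf : k < f0) : (k : ZMod f0) ≠ 0 := by
  haveI : NeZero f0 := ⟨by omega⟩
  intro h
  rw [ZMod.natCast_eq_zero_iff] at h
  exact absurd (Nat.le_of_dvd (by omega) h) (by omega)

lemma mem_edge (n f0 : ℕ) (hn : 3 ≤ n) (hf0 : 2 * n + 1 ≤ f0)
    (M : Finset (Finset (ZMod f0)))
    (hM : M = (((Delta n f0).erase (Finset.Icc 1 n)).erase (Finset.Icc (f0 + 1) (f0 + n))).image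
      (fun F => F.image (fun x : ℕ => (x : ZMod f0))))
    (a : ZMod f0) (k : ℕ) (hk1 : 1 ≤ k) (hk2 : k ≤ n) :
    ∃ S ∈ M, a ∈ S ∧ a + (k : ZMod f0) ∈ S := by
  haveI : NeZero f0 := ⟨by omega⟩
  set i : ℕ := if a.val = 0 then f0 else a.val with hi
  have hia : (i : ZMod f0) = a := by
    by_cases h : a.val = 0
    · simp only [hi, h, if_pos]
      rw [ZMod.natCast_self]
      exact ((ZMod.val_eq_zero a).mp h).symm
    · simp only [hi, h, if_neg, Ne, not_false_iff]
      exact ZMod.natCast_zmod_val a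
  have hvlt : a.val < f0 := ZMod.val_lt a
  have hi1 : 1 ≤ i := by rw [hi]; split <;> omega
  have hi2 : i ≤ f0 := by rw [hi]; split <;> omega
  set t : ℕ := if k = 1 then i + 2 else i + 1 with ht
  have htlb : i + 1 ≤ t := by rw [ht]; split <;> omega
  have htub : t ≤ n + i - 1 := by rw [ht]; split <;> omega
  have htne : i + k ≠ t := by rw [ht]; split <;> omega
  refine ⟨((Finset.Icc i (n + i)).erase t).image (fun x : ℕ => (x : ZMod f0)), ?_, ?_, ?_⟩
  · rw [hM]
    exact Finset.mem_image_of_mem _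
      ((erased_mem n f0 hn hf0 _).mpr ⟨i, t, hi1, hi2, htlb, htub, rfl⟩)
  · refine Finset.mem_image.mpr ⟨i, ?_, hia⟩
    exact Finset.mem_erase.mpr ⟨by omega, Finset.mem_Icc.mpr (by omega)⟩
  · refine Finset.mem_image.mpr ⟨i + k, ?_, ?_⟩
    · exact Finset.mem_erase.mpr ⟨htne, Finset.mem_Icc.mpr (by omega)⟩
    · rw [Nat.cast_add, hia]

lemma edge_diff (n f0 : ℕ) (hn : 3 ≤ n) (hf0 : 2 * n + 1 ≤ f0)
    (M : Finset (Finset (ZMod f0)))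
    (hM : M = (((Delta n f0).erase (Finset.Icc 1 n)).erase (Finset.Icc (f0 + 1) (f0 + n))).image
      (fun F => F.image (fun x : ℕ => (x : ZMod f0))))
    (a b : ZMod f0) (hab : a ≠ b) (S : Finset (ZMod f0)) (hS : S ∈ M)
    (ha : a ∈ S) (hb : b ∈ S) :
    ∃ k : ℕ, 1 ≤ k ∧ k ≤ n ∧ (a - b = (k : ZMod f0) ∨ b - a = (k : ZMod f0)) := by
  rw [hM, Finset.mem_image] at hS
  obtain ⟨F, hF, rfl⟩ := hS
  rw [erased_mem n f0 hn hf0] at hF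
  obtain ⟨i, t, h1, h2, h3, h4, rfl⟩ := hF
  obtain ⟨x, hx, rfl⟩ := Finset.mem_image.mp ha
  obtain ⟨y, hy, rfl⟩ := Finset.mem_image.mp hb
  rw [Finset.mem_erase, Finset.mem_Icc] at hx hy
  rcases Nat.lt_trichotomy x y with h | h | h
  · refine ⟨y - x, by omega, by omega, Or.inr ?_⟩
    rw [Nat.cast_sub (by omega)]
  · exact absurd (by rw [h]) hab
  · refine ⟨x - y, by omega, by omega, Or.inl ?_⟩
    rw [Nat.cast_sub (by omega)]


/-- let `M` be the identified stacked sphere obtained from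
`Δ_{f₀}` by reducing modulo `f₀` (which identifies the vertex pairs
`(i, f₀ + i)` for `1 ≤ i ≤ n`) and dropping the two identified facets
`{1, …, n}` and `{f₀+1, …, f₀+n}`.  Then `{a, b}` lies in a member of `M` iff
`a - b ∈ {±1, …, ±n}` in `ℤ/f₀`; consequently `M` has exactly `f₀` vertices and
exactly `n·f₀` edges. -/
theorem iss_edge_count (n f0 : ℕ) (hn : 3 ≤ n) (hf0 : 2 * n + 1 ≤ f0)
    (M : Finset (Finset (ZMod f0)))
    (hM : M = (((Delta n f0).erase (Finset.Icc 1 n)).erase (Finset.Icc (f0 + 1) (f0 + n))).image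
      (fun F => F.image (fun x : ℕ => (x : ZMod f0)))) :
    (∀ a b : ZMod f0, a ≠ b →
      ((∃ S ∈ M, a ∈ S ∧ b ∈ S) ↔
        ∃ k : ℕ, 1 ≤ k ∧ k ≤ n ∧ (a - b = (k : ZMod f0) ∨ b - a = (k : ZMod f0)))) ∧
    (M.biUnion id).card = f0 ∧
    (M.biUnion (fun S => S.powersetCard 2)).card = n * f0 := by
  haveI : NeZero f0 := ⟨by omega⟩
  refine ⟨?_, ?_, ?_⟩
  · intro a b hab
    constructor
    · rintro ⟨S, hS, ha, hb⟩
      exact edge_diff n f0 hn hf0 M hM a b hab S hS ha hb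
    · rintro ⟨k, hk1, hk2, h | h⟩
      · obtain ⟨S, hS, h1, h2⟩ := mem_edge n f0 hn hf0 M hM b k hk1 hk2
        have hab' : a = b + (k : ZMod f0) := by rw [← h]; ring
        exact ⟨S, hS, hab' ▸ h2, h1⟩
      · obtain ⟨S, hS, h1, h2⟩ := mem_edge n f0 hn hf0 M hM a k hk1 hk2
        have hab' : b = a + (k : ZMod f0) := by rw [← h]; ring
        exact ⟨S, hS, h1, hab' ▸ h2⟩
  · have huniv : M.biUnion id = Finset.univ := by
      apply Finset.eq_univ_of_forall
      intro a
      obtain ⟨S, hS, h1, _⟩ := mem_edge n f0 hn hf0 M hM a 1 le_rfl (by omega)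
      exact Finset.mem_biUnion.mpr ⟨S, hS, h1⟩
    rw [huniv, Finset.card_univ, ZMod.card]
  · have key : M.biUnion (fun S => S.powersetCard 2) =
        (Finset.univ ×ˢ Finset.Icc 1 n).image
          (fun p : ZMod f0 × ℕ => ({p.1, p.1 + (p.2 : ZMod f0)} : Finset (ZMod f0))) := by
      ext e
      simp only [Finset.mem_biUnion, Finset.mem_image, Finset.mem_product, Finset.mem_univ,
        Finset.mem_Icc, true_and, Finset.mem_powersetCard]
      constructor
      · rintro ⟨S, hS, hsub, hcard⟩
        obtain ⟨a, b, hab, rfl⟩ := Finset.card_eq_two.mp hcard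
        have ha : a ∈ S := hsub (by simp)
        have hb : b ∈ S := hsub (by simp)
        obtain ⟨k, hk1, hk2, h | h⟩ := edge_diff n f0 hn hf0 M hM a b hab S hS ha hb
        · refine ⟨(b, k), ⟨hk1, hk2⟩, ?_⟩
          have hab' : a = b + (k : ZMod f0) := by rw [← h]; ring
          rw [hab', Finset.pair_comm]
        · refine ⟨(a, k), ⟨hk1, hk2⟩, ?_⟩
          have hab' : b = a + (k : ZMod f0) := by rw [← h]; ring
          rw [hab']
      · rintro ⟨⟨a, k⟩, ⟨hk1, hk2⟩, rfl⟩
        obtain ⟨S, hS, h1, h2⟩ := mem_edge n f0 hn hf0 M hM a k hk1 hk2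
        refine ⟨S, hS, ?_, ?_⟩
        · intro x hx
          simp only [Finset.mem_insert, Finset.mem_singleton] at hx
          rcases hx with rfl | rfl
          · exact h1
          · exact h2
        · rw [Finset.card_insert_of_notMem, Finset.card_singleton]
          simp only [Finset.mem_singleton]
          intro hEq
          exact cast_ne_zero f0 k hk1 (by omega) (left_eq_add.mp hEq)
    have hinj : Set.InjOn
        (fun p : ZMod f0 × ℕ => ({p.1, p.1 + (p.2 : ZMod f0)} : Finset (ZMod f0)))
        ((Finset.univ ×ˢ Finset.Icc 1 n : Finset (ZMod f0 × ℕ)) : Set (ZMod f0 × ℕ)) := by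
      rintro ⟨a, k⟩ hak ⟨b, l⟩ hbl hEq
      have hk := (Finset.mem_product.mp (Finset.mem_coe.mp hak)).2
      have hl := (Finset.mem_product.mp (Finset.mem_coe.mp hbl)).2
      rw [Finset.mem_Icc] at hk hl
      simp only at hEq
      have h1 : a = b ∨ a = b + (l : ZMod f0) := by
        have := hEq ▸ (Finset.mem_insert_self a {a + (k : ZMod f0)})
        simpa using this
      have h2 : a + (k : ZMod f0) = b ∨ a + (k : ZMod f0) = b + (l : ZMod f0) := by
        have : a + (k : ZMod f0) ∈ ({a, a + (k : ZMod f0)} : Finset (ZMod f0)) := by simp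
        rw [hEq] at this
        simpa using this
      have hcast : ∀ j : ℕ, 1 ≤ j → j ≤ 2 * n → ((j : ZMod f0) = 0 → False) := by
        intro j hj1 hj2 hj
        exact cast_ne_zero f0 j hj1 (by omega) hj
      rcases h1 with rfl | h1
      · rcases h2 with h2 | h2
        · exact absurd (left_eq_add.mp h2.symm) (hcast k hk.1 (by omega))
        · have hkl : (k : ZMod f0) = (l : ZMod f0) := add_left_cancel h2
          have hkl' : k = l := by
            have hk' : ((k : ZMod f0)).val = k := ZMod.val_cast_of_lt (by omega)
            have hl' : ((l : ZMod f0)).val = l := ZMod.val_cast_of_lt (by omega)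
            rw [← hk', ← hl', hkl]
          rw [hkl']
      · rcases h2 with h2 | h2
        · exfalso
          have hb2 : b = b + ((l : ZMod f0) + (k : ZMod f0)) := by
            rw [← add_assoc, ← h1, h2]
          have hz : ((l + k : ℕ) : ZMod f0) = 0 := by
            push_cast
            exact (left_eq_add.mp hb2)
          exact hcast (l + k) (by omega) (by omega) hz
        · exfalso
          have haa : a + (k : ZMod f0) = a := by rw [h2, ← h1]
          exact hcast k hk.1 (by omega) (left_eq_add.mp haa.symm)
    rw [key, Finset.card_image_of_injOn hinj, Finset.card_product, Finset.card_univ, ZMod.card,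
      Nat.card_Icc, Nat.add_sub_cancel, Nat.mul_comm]
end
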